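/- arXiv:2601.17573 — 6 statements merged into one kernel-verified Lean document; each statement's English description precedes it below -/
import Mathlib

section
/- Let d ≥ 2, ν₀ ≥ 1, and let α, β be integers with α + β = d^{ν₀}, α > d. Let T(n) = n/d if d ∣ n and T(n) = (α·n + β·(n mod d))/d otherwise. Then for every r with 1 ≤ r ≤ d - 1, the ν₀-th iterate of T at r equals r; more precisely T(r) = r·d^{ν₀ - 1} and T(r·d^k) = r·d^{k-1} for 1 ≤ k ≤ ν₀ - 1. -/
theorem stmt2 (d α β : ℤ) (ν₀ : ℕ) (hd : 2 ≤ d) (hν : 1 ≤ ν₀)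
    (hαβ : α + β = d ^ ν₀) (hα : d < α) (T : ℤ → ℤ)
    (hT : ∀ n : ℤ, T n = if d ∣ n then n / d else (α * n + β * (n % d)) / d) :
    ∀ r : ℤ, 1 ≤ r → r ≤ d - 1 →
      T^[ν₀] r = r ∧ T r = r * d ^ (ν₀ - 1) ∧
      ∀ k : ℕ, 1 ≤ k → k ≤ ν₀ - 1 → T (r * d ^ k) = r * d ^ (k - 1) := by
  intro r hr1 hr2
  have hd0 : d ≠ 0 := by omega
  have hndvd : ¬ d ∣ r := by
    intro h
    rcases Int.le_of_dvd (by omega) h with h'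
    omega
  have hmod : r % d = r := Int.emod_eq_of_lt (by omega) (by omega)
  have hdiv : ∀ x : ℤ, T (x * d) = x := by
    intro x
    rw [hT, if_pos ⟨x, by ring⟩, Int.mul_ediv_cancel _ hd0]
  have hTr : T r = r * d ^ (ν₀ - 1) := by
    rw [hT, if_neg hndvd, hmod]
    have : α * r + β * r = (r * d ^ (ν₀ - 1)) * d := by
      have hpow : d ^ ν₀ = d ^ (ν₀ - 1) * d := by
        conv_lhs => rw [show ν₀ = (ν₀ - 1) + 1 by omega]
        rw [pow_succ]
      rw [← add_mul, hαβ, hpow]; ring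
    rw [this, Int.mul_ediv_cancel _ hd0]
  have hiter : ∀ m : ℕ, T^[m] (r * d ^ m) = r := by
    intro m
    induction m with
    | zero => simp
    | succ n ih =>
      rw [Function.iterate_succ_apply, pow_succ, ← mul_assoc, hdiv, ih]
  refine ⟨?_, hTr, ?_⟩
  · have : T^[ν₀] r = T^[ν₀ - 1] (T r) := by
      conv_lhs => rw [show ν₀ = (ν₀ - 1) + 1 by omega]
      rw [Function.iterate_add_apply, Function.iterate_one]
    rw [this, hTr, hiter]
  · intro k hk1 hk2
    have : r * d ^ k = (r * d ^ (k - 1)) * d := by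
      conv_lhs => rw [show k = (k - 1) + 1 by omega]
      rw [pow_succ]; ring
    rw [this, hdiv]
end

section
/- Let d ≥ 2, ν₁ ≥ 1, let α = d^{ν₁} - 1 and let β be a positive integer with α + β ≡ 0 (mod d). Let T(n) = n/d if d ∣ n and T(n) = (α·n + β·(n mod d))/d otherwise. Then for every r with 1 ≤ r ≤ d - 1, T(r·β) = r·β·d^{ν₁ - 1}, and hence T^{(ν₁)}(r·β) = r·β. -/
theorem stmt3 (d β : ℤ) (ν₁ : ℕ) (hd : 2 ≤ d) (hν : 1 ≤ ν₁)
    (α : ℤ) (hα : α = d ^ ν₁ - 1) (hβ : 0 < β) (hdvd : d ∣ (α + β)) (T : ℤ → ℤ)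
    (hT : ∀ n : ℤ, T n = if d ∣ n then n / d else (α * n + β * (n % d)) / d) :
    ∀ r : ℤ, 1 ≤ r → r ≤ d - 1 →
      T (r * β) = r * β * d ^ (ν₁ - 1) ∧ T^[ν₁] (r * β) = r * β := by
  intro r hr1 hr2
  have hd0 : d ≠ 0 := by omega
  obtain ⟨c, hc⟩ := hdvd
  have hpow : d ^ ν₁ = d * d ^ (ν₁ - 1) := by
    rw [← pow_succ']
    congr 1
    omega
  have hβ1 : β % d = 1 := by
    have hβeq : β = 1 + d * (c - d ^ (ν₁ - 1)) := by
      rw [hα] at hc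
      rw [mul_sub, ← hpow]
      linarith
    rw [hβeq, Int.add_mul_emod_self_left]
    exact Int.emod_eq_of_lt (by norm_num) (by omega)
  have hrβ : (r * β) % d = r := by
    rw [Int.mul_emod, hβ1, mul_one, Int.emod_emod_of_dvd _ dvd_rfl]
    exact Int.emod_eq_of_lt (by omega) (by omega)
  have hnd : ¬ d ∣ r * β := by
    intro h
    have := Int.emod_emod_of_dvd (r * β) (dvd_refl d)
    rw [Int.emod_eq_zero_of_dvd h] at hrβ
    omega
  have h1 : T (r * β) = r * β * d ^ (ν₁ - 1) := by
    rw [hT, if_neg hnd, hrβ]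
    have hnum : α * (r * β) + β * r = r * β * d ^ (ν₁ - 1) * d := by
      rw [hα, hpow]; ring
    rw [hnum, Int.mul_ediv_cancel _ hd0]
  have key : ∀ k, k ≤ ν₁ - 1 → T^[k] (r * β * d ^ (ν₁ - 1)) = r * β * d ^ (ν₁ - 1 - k) := by
    intro k
    induction k with
    | zero => simp
    | succ n ih =>
      intro hk
      rw [Function.iterate_succ_apply', ih (by omega), hT]
      have hstep : r * β * d ^ (ν₁ - 1 - n) = r * β * d ^ (ν₁ - 1 - (n + 1)) * d := by
        have he : ν₁ - 1 - n = (ν₁ - 1 - (n + 1)) + 1 := by omega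
        rw [he, pow_succ]; ring
      have hd2 : d ∣ r * β * d ^ (ν₁ - 1 - n) := ⟨r * β * d ^ (ν₁ - 1 - (n + 1)), by
        rw [hstep]; ring⟩
      rw [if_pos hd2, hstep, Int.mul_ediv_cancel _ hd0]
  refine ⟨h1, ?_⟩
  have hν' : ν₁ = (ν₁ - 1) + 1 := by omega
  rw [hν', Function.iterate_succ_apply, h1, key (ν₁ - 1) le_rfl]
  simp
end

section
/- Let d ≥ 2, μ₀ ≥ 1, ν₁ ≥ 1 with 2μ₀ > ν₁. Set α = d^{ν₁} + 1 and β = d^{2μ₀+ν₁} - α². Let T be the map T(n) = n/d if d ∣ n, else T(n) = (α·n + β·(n mod d))/d. Then for all integers k, r₁, r₂, r₃ with 1 ≤ k ≤ μ₀, 1 ≤ r₁, r₂, r₃ ≤ d-1, 1 ≤ r₁r₂ ≤ d-1, 1 ≤ r₁r₃ ≤ d-1, the number ω = r₁·(r₂·d^k + r₃·α) satisfies T^{(2μ₀+ν₁)}(ω) = ω. -/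
theorem stmt7 (d : ℤ) (μ₀ ν₁ : ℕ) (hd : 2 ≤ d) (hμ : 1 ≤ μ₀) (hν : 1 ≤ ν₁)
    (hμν : ν₁ < 2 * μ₀) (α β : ℤ) (hα : α = d ^ ν₁ + 1)
    (hβ : β = d ^ (2 * μ₀ + ν₁) - α ^ 2) (T : ℤ → ℤ)
    (hT : ∀ n : ℤ, T n = if d ∣ n then n / d else (α * n + β * (n % d)) / d) :
    ∀ (k : ℕ) (r₁ r₂ r₃ : ℤ), 1 ≤ k → k ≤ μ₀ →
      1 ≤ r₁ → r₁ ≤ d - 1 → 1 ≤ r₂ → r₂ ≤ d - 1 → 1 ≤ r₃ → r₃ ≤ d - 1 →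
      1 ≤ r₁ * r₂ → r₁ * r₂ ≤ d - 1 → 1 ≤ r₁ * r₃ → r₁ * r₃ ≤ d - 1 →
      T^[2 * μ₀ + ν₁] (r₁ * (r₂ * d ^ k + r₃ * α)) = r₁ * (r₂ * d ^ k + r₃ * α) := by
  intro k r₁ r₂ r₃ hk1 hkμ hr₁ hr₁' hr₂ hr₂' hr₃ hr₃' ha1 ha2 hb1 hb2
  have hdne : d ≠ 0 := by omega
  obtain ⟨ν', rfl⟩ : ∃ ν', ν₁ = ν' + 1 := ⟨ν₁ - 1, by omega⟩
  obtain ⟨k', rfl⟩ : ∃ k', k = k' + 1 := ⟨k - 1, by omega⟩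
  obtain ⟨m₂, hm₂⟩ : ∃ m₂, 2 * μ₀ + (ν' + 1) = k' + m₂ + 2 :=
    ⟨2 * μ₀ + (ν' + 1) - k' - 2, by omega⟩
  rw [hm₂] at hβ ⊢
  -- iterated exact divisions
  have iterDiv : ∀ (m : ℕ) (x y : ℤ) (i j i' j' : ℕ), j' = j + m → i' = i + m →
      T^[m] (x * d ^ j' + y * d ^ i') = x * d ^ j + y * d ^ i := by
    intro m
    induction m with
    | zero => intro x y i j i' j' hj hi; subst hj; subst hi; simp
    | succ m ih =>
      intro x y i j i' j' hj hi
      subst hj; subst hi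
      have hdec : x * d ^ (j + (m + 1)) + y * d ^ (i + (m + 1)) =
          d * (x * d ^ (j + m) + y * d ^ (i + m)) := by ring
      rw [Function.iterate_succ_apply, hT, hdec, if_pos (dvd_mul_right d _),
        Int.mul_ediv_cancel_left _ hdne]
      exact ih x y i j _ _ rfl rfl
  -- the non-divisible step
  have step : ∀ (x y : ℤ) (j : ℕ), 1 ≤ y → y ≤ d - 1 →
      T (x * d ^ (j + 1) + y * α) = α * x * d ^ j + y * d ^ (k' + m₂ + 1) := by
    intro x y j hy1 hy2
    have hdec : x * d ^ (j + 1) + y * α = y + d * (x * d ^ j + y * d ^ ν') := by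
      rw [hα]; ring
    have hmod : (x * d ^ (j + 1) + y * α) % d = y := by
      rw [hdec, Int.add_mul_emod_self_left, Int.emod_eq_of_lt (by linarith) (by linarith)]
    have hnd : ¬ d ∣ (x * d ^ (j + 1) + y * α) := by
      rw [Int.dvd_iff_emod_eq_zero, hmod]; omega
    rw [hT, if_neg hnd, hmod]
    have hnum : α * (x * d ^ (j + 1) + y * α) + β * y =
        d * (α * x * d ^ j + y * d ^ (k' + m₂ + 1)) := by
      rw [hβ]; ring
    rw [hnum, Int.mul_ediv_cancel_left _ hdne]
  -- assemble the orbit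
  have e1 : T (r₁ * (r₂ * d ^ (k' + 1) + r₃ * α)) =
      α * (r₁ * r₂) * d ^ k' + (r₁ * r₃) * d ^ (k' + m₂ + 1) := by
    rw [show r₁ * (r₂ * d ^ (k' + 1) + r₃ * α) =
      (r₁ * r₂) * d ^ (k' + 1) + (r₁ * r₃) * α from by ring]
    exact step (r₁ * r₂) (r₁ * r₃) k' hb1 hb2
  have e2 : T^[k'] (α * (r₁ * r₂) * d ^ k' + (r₁ * r₃) * d ^ (k' + m₂ + 1)) =
      α * (r₁ * r₂) * d ^ 0 + (r₁ * r₃) * d ^ (m₂ + 1) :=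
    iterDiv k' (α * (r₁ * r₂)) (r₁ * r₃) (m₂ + 1) 0 _ _ (by omega) (by omega)
  have e3 : T (α * (r₁ * r₂) * d ^ 0 + (r₁ * r₃) * d ^ (m₂ + 1)) =
      α * (r₁ * r₃) * d ^ m₂ + (r₁ * r₂) * d ^ (k' + m₂ + 1) := by
    rw [show α * (r₁ * r₂) * d ^ 0 + (r₁ * r₃) * d ^ (m₂ + 1) =
      (r₁ * r₃) * d ^ (m₂ + 1) + (r₁ * r₂) * α from by ring]
    exact step (r₁ * r₃) (r₁ * r₂) m₂ ha1 ha2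
  have e4 : T^[m₂] (α * (r₁ * r₃) * d ^ m₂ + (r₁ * r₂) * d ^ (k' + m₂ + 1)) =
      r₁ * (r₂ * d ^ (k' + 1) + r₃ * α) := by
    rw [iterDiv m₂ (α * (r₁ * r₃)) (r₁ * r₂) (k' + 1) 0 _ _ (by omega) (by omega)]
    ring
  rw [show k' + m₂ + 2 = ((m₂ + 1) + k') + 1 from by omega,
    Function.iterate_succ_apply, Function.iterate_add_apply,
    Function.iterate_succ_apply, e1, e2, e3, e4]
end

section
/- Let d ≥ 2, μ₀ ≥ 1, α = d + 1, and β = d^{2μ₀+1} - (d+1)². Let T be the map T(n) = n/d if d ∣ n, else T(n) = (α·n + β·(n mod d))/d. Then T(k·β) = (k+1)·β for all 1 ≤ k ≤ d-1, and T(d·β) = β; hence T^{(d)}(β) = β. -/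
theorem stmt8 (d : ℕ) (μ₀ : ℕ) (hd : 2 ≤ d) (hμ : 1 ≤ μ₀) (α β : ℤ)
    (hα : α = (d : ℤ) + 1) (hβ : β = (d : ℤ) ^ (2 * μ₀ + 1) - ((d : ℤ) + 1) ^ 2)
    (T : ℤ → ℤ)
    (hT : ∀ n : ℤ, T n = if (d : ℤ) ∣ n then n / d else (α * n + β * (n % d)) / d) :
    (∀ k : ℤ, 1 ≤ k → k ≤ (d : ℤ) - 1 → T (k * β) = (k + 1) * β) ∧
    T ((d : ℤ) * β) = β ∧ T^[d] β = β := by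
  have hd' : (2 : ℤ) ≤ (d : ℤ) := by exact_mod_cast hd
  have hd0 : (d : ℤ) ≠ 0 := by omega
  -- d ∣ β + 1
  have hdvd : (d : ℤ) ∣ β + 1 := by
    have h1 : (d : ℤ) ∣ (d : ℤ) ^ (2 * μ₀ + 1) := dvd_pow_self _ (by omega)
    have : β + 1 = (d : ℤ) ^ (2 * μ₀ + 1) - ((d : ℤ) * (d : ℤ) + 2 * (d : ℤ)) := by
      rw [hβ]; ring
    rw [this]
    exact dvd_sub h1 (by exact Dvd.intro _ rfl |>.add ⟨2, by ring⟩)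
  obtain ⟨m, hm⟩ := hdvd
  have hβm : β = (d : ℤ) * m - 1 := by omega
  have hmod : ∀ k : ℤ, 1 ≤ k → k ≤ (d : ℤ) - 1 → (k * β) % (d : ℤ) = (d : ℤ) - k := by
    intro k hk1 hk2
    have h1 : k * β = ((d : ℤ) - k) + (d : ℤ) * (k * m - 1) := by rw [hβm]; ring
    rw [h1, Int.add_mul_emod_self_left, Int.emod_eq_of_lt (by omega) (by omega)]
  have hmain : ∀ k : ℤ, 1 ≤ k → k ≤ (d : ℤ) - 1 → T (k * β) = (k + 1) * β := by
    intro k hk1 hk2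
    have hndvd : ¬ (d : ℤ) ∣ k * β := by
      intro h
      have := Int.emod_emod_of_dvd (k * β) (dvd_refl (d : ℤ))
      have h0 : (k * β) % (d : ℤ) = 0 := Int.emod_eq_zero_of_dvd h
      rw [hmod k hk1 hk2] at h0
      omega
    rw [hT, if_neg hndvd, hmod k hk1 hk2]
    have hnum : α * (k * β) + β * ((d : ℤ) - k) = (d : ℤ) * ((k + 1) * β) := by
      rw [hα]; ring
    rw [hnum, Int.mul_ediv_cancel_left _ hd0]
  have hdβ : T ((d : ℤ) * β) = β := by
    rw [hT, if_pos ⟨β, rfl⟩, Int.mul_ediv_cancel_left _ hd0]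
  refine ⟨hmain, hdβ, ?_⟩
  have hiter : ∀ j : ℕ, j ≤ d - 1 → T^[j] β = ((j : ℤ) + 1) * β := by
    intro j hj
    induction j with
    | zero => simp
    | succ n ih =>
      rw [Function.iterate_succ_apply', ih (by omega)]
      have hn1 : (1 : ℤ) ≤ (n : ℤ) + 1 := by omega
      have hn2 : (n : ℤ) + 1 ≤ (d : ℤ) - 1 := by
        have : (n : ℕ) + 1 ≤ d - 1 := hj
        omega
      rw [hmain _ hn1 hn2]
      push_cast; ring
  have hdd : d = (d - 1) + 1 := by omega
  rw [hdd, Function.iterate_succ_apply', hiter (d - 1) le_rfl]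
  have : ((d - 1 : ℕ) : ℤ) + 1 = (d : ℤ) := by omega
  rw [this, hdβ]
end

section
/- Let d ≥ 2, α > d with gcd(d, α) = 1, β > 0, and let T be the map T(n) = n/d if d ∣ n, else T(n) = (α·n + β·(n mod d))/d. Suppose Ω ⊆ ℕ is a finite nonempty set with T(Ω) = Ω (a cycle) of cardinality L, and let K̄ be the number of elements of Ω not divisible by d. Then d^L = ∏_{n ∈ Ω, d ∤ n} (α + β·(n mod d)/n), and in particular (α + β/max(Ω))^{K̄} ≤ d^L ≤ (α + β·(d-1)/min(Ω))^{K̄}. -/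
theorem stmt12 (d α β : ℤ) (hd : 2 ≤ d) (hα : d < α) (hco : IsCoprime d α)
    (hβ : 0 < β) (hdvd : d ∣ (α + β)) (T : ℤ → ℤ)
    (hT : ∀ n : ℤ, T n = if d ∣ n then n / d else (α * n + β * (n % d)) / d)
    (Ω : Finset ℤ) (hne : Ω.Nonempty) (hpos : ∀ n ∈ Ω, 0 < n)
    (hcycle : Ω.image T = Ω) :
    (d : ℝ) ^ Ω.card =
      ∏ n ∈ Ω.filter (fun n => ¬ d ∣ n), ((α : ℝ) + (β : ℝ) * ((n % d : ℤ) : ℝ) / (n : ℝ)) ∧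
    ((α : ℝ) + (β : ℝ) / ((Ω.max' hne : ℤ) : ℝ)) ^ (Ω.filter (fun n => ¬ d ∣ n)).card
      ≤ (d : ℝ) ^ Ω.card ∧
    (d : ℝ) ^ Ω.card ≤
      ((α : ℝ) + (β : ℝ) * ((d : ℝ) - 1) / ((Ω.min' hne : ℤ) : ℝ)) ^
        (Ω.filter (fun n => ¬ d ∣ n)).card := by
  have hd0 : (0:ℤ) < d := by linarith
  have hdR : (0:ℝ) < (d:ℝ) := by exact_mod_cast hd0
  set g : ℤ → ℝ := fun n => (α : ℝ) + (β : ℝ) * ((n % d : ℤ) : ℝ) / (n : ℝ) with hg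
  have key : ∀ n ∈ Ω, (T n : ℝ) * d = (n : ℝ) * (if d ∣ n then 1 else g n) := by
    intro n hn
    have hn0 : (0:ℤ) < n := hpos n hn
    have hnR : (0:ℝ) < (n:ℝ) := by exact_mod_cast hn0
    rw [hT n]
    by_cases h : d ∣ n
    · simp only [if_pos h]
      have h1 : ((n / d : ℤ):ℝ) * (d:ℝ) = ((n / d * d : ℤ):ℝ) := by push_cast; ring
      rw [h1, Int.ediv_mul_cancel h, mul_one]
    · have hdvd2 : d ∣ α * n + β * (n % d) := by
        have h1 : n % d = n - d * (n / d) := by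
          have := Int.emod_add_mul_ediv n d; linarith
        obtain ⟨c, hc⟩ := hdvd
        refine ⟨c * n - β * (n / d), ?_⟩
        rw [h1]; nlinarith [hc]
      obtain ⟨k, hk⟩ := hdvd2
      have hq : (α * n + β * (n % d)) / d = k := by
        rw [hk]; exact Int.mul_ediv_cancel_left k (ne_of_gt hd0)
      simp only [if_neg h, hq, hg]
      have h2 : (k:ℝ) * d = (α:ℝ) * n + β * ((n % d : ℤ):ℝ) := by
        have h3 := congrArg (Int.cast : ℤ → ℝ) hk; push_cast at h3; linarith
      rw [h2]
      field_simp
  have hinj : ∀ x ∈ Ω, ∀ y ∈ Ω, T x = T y → x = y := by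
    have h := Finset.injOn_of_card_image_eq (f := T) (s := Ω) (by rw [hcycle])
    exact fun x hx y hy => h hx hy
  have prodT : ∏ n ∈ Ω, (T n : ℝ) = ∏ n ∈ Ω, (n : ℝ) := by
    have h4 : ∏ m ∈ Ω.image T, (m:ℝ) = ∏ n ∈ Ω, (T n : ℝ) := Finset.prod_image hinj
    rw [hcycle] at h4
    exact h4.symm
  have hprodpos : (0:ℝ) < ∏ n ∈ Ω, (n:ℝ) :=
    Finset.prod_pos fun n hn => by exact_mod_cast hpos n hn
  have main : (d:ℝ) ^ Ω.card = ∏ n ∈ Ω.filter (fun n => ¬ d ∣ n), g n := by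
    have h1 : ∏ n ∈ Ω, ((T n : ℝ) * d) = ∏ n ∈ Ω, ((n:ℝ) * (if d ∣ n then 1 else g n)) :=
      Finset.prod_congr rfl key
    rw [Finset.prod_mul_distrib, Finset.prod_mul_distrib, prodT, Finset.prod_const] at h1
    have h2 : (d:ℝ)^Ω.card = ∏ n ∈ Ω, (if d ∣ n then 1 else g n) :=
      mul_left_cancel₀ (ne_of_gt hprodpos) h1
    rw [h2, Finset.prod_filter]
    refine Finset.prod_congr rfl fun n hn => ?_
    by_cases h : d ∣ n <;> simp [h]
  have hMmem := Ω.max'_mem hne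
  have hmmem := Ω.min'_mem hne
  have hM : (0:ℝ) < ((Ω.max' hne : ℤ):ℝ) := by exact_mod_cast hpos _ hMmem
  have hm : (0:ℝ) < ((Ω.min' hne : ℤ):ℝ) := by exact_mod_cast hpos _ hmmem
  have hαR : (0:ℝ) < (α:ℝ) := by exact_mod_cast (by linarith : (0:ℤ) < α)
  have hβR : (0:ℝ) < (β:ℝ) := by exact_mod_cast hβ
  have hbounds : ∀ n ∈ Ω.filter (fun n => ¬ d ∣ n),
      ((α:ℝ) + β / ((Ω.max' hne : ℤ):ℝ)) ≤ g n ∧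
      g n ≤ (α:ℝ) + β * ((d:ℝ) - 1) / ((Ω.min' hne : ℤ):ℝ) := by
    intro n hn
    rw [Finset.mem_filter] at hn
    obtain ⟨hnΩ, hnd⟩ := hn
    have hn0 : (0:ℤ) < n := hpos n hnΩ
    have hnR : (0:ℝ) < (n:ℝ) := by exact_mod_cast hn0
    have hr0 : 0 ≤ n % d := Int.emod_nonneg n (ne_of_gt hd0)
    have hrne : n % d ≠ 0 := fun hz => hnd (Int.dvd_of_emod_eq_zero hz)
    have hr1 : (1:ℤ) ≤ n % d := lt_of_le_of_ne hr0 (Ne.symm hrne)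
    have hr2 : n % d ≤ d - 1 := by
      have := Int.emod_lt_of_pos n hd0; linarith
    have hr1R : (1:ℝ) ≤ ((n % d : ℤ):ℝ) := by exact_mod_cast hr1
    have hr2R : ((n % d : ℤ):ℝ) ≤ (d:ℝ) - 1 := by
      have : ((n % d : ℤ):ℝ) ≤ ((d - 1 : ℤ):ℝ) := by exact_mod_cast hr2
      push_cast at this; linarith
    have hnM : (n:ℝ) ≤ ((Ω.max' hne : ℤ):ℝ) := by exact_mod_cast Ω.le_max' n hnΩ
    have hmn : ((Ω.min' hne : ℤ):ℝ) ≤ (n:ℝ) := by exact_mod_cast Ω.min'_le n hnΩ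
    constructor
    · have : (β:ℝ) / ((Ω.max' hne : ℤ):ℝ) ≤ β * ((n % d : ℤ):ℝ) / (n:ℝ) := by
        rw [div_le_div_iff₀ hM hnR]
        have h5 := mul_le_mul_of_nonneg_left hnM hβR.le
        have h6 := mul_le_mul_of_nonneg_left hr1R (mul_pos hβR hM).le
        nlinarith [h5, h6]
      simpa [hg] using add_le_add_left this (α:ℝ)
    · have : (β:ℝ) * ((n % d : ℤ):ℝ) / (n:ℝ) ≤ β * ((d:ℝ) - 1) / ((Ω.min' hne : ℤ):ℝ) := by
        rw [div_le_div_iff₀ hnR hm]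
        have hd1 : (1:ℝ) ≤ (d:ℝ) := by exact_mod_cast (by linarith : (1:ℤ) ≤ d)
        have h7 := mul_le_mul (mul_le_mul_of_nonneg_left hr2R hβR.le) hmn hm.le
          (by nlinarith : (0:ℝ) ≤ (β:ℝ) * ((d:ℝ) - 1))
        nlinarith [h7]
      simpa [hg] using add_le_add_left this (α:ℝ)
  have hbasepos : (0:ℝ) < (α:ℝ) + β / ((Ω.max' hne : ℤ):ℝ) := by positivity
  refine ⟨main, ?_, ?_⟩
  · rw [main, ← Finset.prod_const]
    exact Finset.prod_le_prod (fun n _ => le_of_lt hbasepos)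
      (fun n hn => (hbounds n hn).1)
  · rw [main, ← Finset.prod_const]
    exact Finset.prod_le_prod
      (fun n hn => le_trans (le_of_lt hbasepos) (hbounds n hn).1)
      (fun n hn => (hbounds n hn).2)
end

section
/- Let d ≥ 2, α > d with gcd(d, α) = 1, β > 0, and let T be the map associated to (d, α, β) with κ₀ = +1. Suppose Ω is a cycle for T of length L with K̄ elements not divisible by d, and let M = min(Ω). Then 0 < L - K̄·(log α / log d) ≤ K̄·log(1 + β(d-1)/(α·M))/log d ≤ K̄·β·(d-1)/(α·M·log d). -/
theorem stmt13 (d α β : ℤ) (hd : 2 ≤ d) (hα : d < α) (hco : IsCoprime d α)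
    (hβ : 0 < β) (hdvd : d ∣ (α + β)) (T : ℤ → ℤ)
    (hT : ∀ n : ℤ, T n = if d ∣ n then n / d else (α * n + β * (n % d)) / d)
    (Ω : Finset ℤ) (hne : Ω.Nonempty) (hpos : ∀ n ∈ Ω, 0 < n)
    (hcycle : Ω.image T = Ω) :
    let L : ℝ := Ω.card
    let K : ℝ := (Ω.filter (fun n => ¬ d ∣ n)).card
    let M : ℝ := ((Ω.min' hne : ℤ) : ℝ)
    let ξ : ℝ := Real.log α / Real.log d
    0 < L - K * ξ ∧
    L - K * ξ ≤ K * Real.log (1 + (β : ℝ) * ((d : ℝ) - 1) / ((α : ℝ) * M)) / Real.log d ∧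
    K * Real.log (1 + (β : ℝ) * ((d : ℝ) - 1) / ((α : ℝ) * M)) / Real.log d
      ≤ K * (β : ℝ) * ((d : ℝ) - 1) / ((α : ℝ) * M * Real.log d) := by
  intro L K M ξ
  classical
  set S : Finset ℤ := Ω.filter (fun n => ¬ d ∣ n) with hSdef
  have hd0 : (0:ℤ) < d := by linarith
  have hα0 : (0:ℤ) < α := by linarith
  -- d * T n
  have hdT : ∀ n ∈ Ω, d * T n = if d ∣ n then n else α * n + β * (n % d) := by
    intro n _
    rw [hT]
    split_ifs with h
    · exact Int.mul_ediv_cancel' h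
    · refine Int.mul_ediv_cancel' ?_
      have h1 : d ∣ n - n % d := Int.dvd_self_sub_of_emod_eq rfl
      have h2 : α * n + β * (n % d) = (α + β) * n - β * (n - n % d) := by ring
      rw [h2]
      exact dvd_sub (hdvd.mul_right n) (h1.mul_left β)
  -- T injective on Ω, product identity
  have hinj : Set.InjOn T Ω := Finset.injOn_of_card_image_eq (by rw [hcycle])
  have hprod : ∏ n ∈ Ω, n = ∏ n ∈ Ω, T n := by
    conv_lhs => rw [← hcycle]
    exact Finset.prod_image (fun x hx y hy h => hinj hx hy h)
  have key : d ^ Ω.card * ∏ n ∈ Ω, n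
      = ∏ n ∈ Ω, (if d ∣ n then n else α * n + β * (n % d)) := by
    rw [hprod]
    calc d ^ Ω.card * ∏ n ∈ Ω, T n = ∏ n ∈ Ω, d * T n := by
          rw [Finset.prod_mul_distrib, Finset.prod_const]
      _ = _ := Finset.prod_congr rfl hdT
  -- split by filter
  have hsplit1 : (∏ n ∈ Ω, n)
      = (∏ n ∈ Ω.filter (fun n => d ∣ n), n) * ∏ n ∈ S, n :=
    (Finset.prod_filter_mul_prod_filter_not Ω _ _).symm
  have hsplit2 : (∏ n ∈ Ω, (if d ∣ n then n else α * n + β * (n % d)))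
      = (∏ n ∈ Ω.filter (fun n => d ∣ n), n) * ∏ n ∈ S, (α * n + β * (n % d)) := by
    rw [← Finset.prod_filter_mul_prod_filter_not Ω (fun n => d ∣ n)]
    congr 1
    · exact Finset.prod_congr rfl (fun n hn => if_pos (Finset.mem_filter.mp hn).2)
    · exact Finset.prod_congr rfl (fun n hn => if_neg (Finset.mem_filter.mp hn).2)
  have hP0 : (0:ℤ) < ∏ n ∈ Ω.filter (fun n => d ∣ n), n :=
    Finset.prod_pos (fun n hn => hpos n (Finset.mem_filter.mp hn).1)
  have keyS : d ^ Ω.card * ∏ n ∈ S, n = ∏ n ∈ S, (α * n + β * (n % d)) := by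
    have := key
    rw [hsplit1, hsplit2] at this
    have h := mul_left_cancel₀ (ne_of_gt hP0)
      (show (∏ n ∈ Ω.filter (fun n => d ∣ n), n) * (d ^ Ω.card * ∏ n ∈ S, n)
          = (∏ n ∈ Ω.filter (fun n => d ∣ n), n) * ∏ n ∈ S, (α * n + β * (n % d)) by
        rw [← this]; ring)
    exact h
  -- S nonempty
  have hSne : S.Nonempty := by
    rw [Finset.nonempty_iff_ne_empty]
    intro hemp
    rw [hemp] at keyS
    simp at keyS
    have hc : Ω.card ≠ 0 := Finset.card_ne_zero_of_mem hne.choose_spec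
    have h2 : (1:ℤ) < d ^ Ω.card := one_lt_pow₀ (by linarith) hc
    omega
  -- real versions
  have hL : L = (Ω.card : ℝ) := rfl
  have hK : K = (S.card : ℝ) := rfl
  have hMv : M = ((Ω.min' hne : ℤ) : ℝ) := rfl
  have hξ : ξ = Real.log α / Real.log d := rfl
  have hM0 : (0:ℝ) < M := by
    rw [hMv]; exact_mod_cast hpos _ (Ω.min'_mem hne)
  have hβR : (0:ℝ) < (β:ℝ) := by exact_mod_cast hβ
  have hαR : (1:ℝ) < (α:ℝ) := by exact_mod_cast by linarith
  have hαR0 : (0:ℝ) < (α:ℝ) := by linarith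
  have hdR : (1:ℝ) < (d:ℝ) := by exact_mod_cast by linarith
  have hPS : (0:ℝ) < ∏ n ∈ S, (n:ℝ) :=
    Finset.prod_pos (fun n hn => by exact_mod_cast hpos n (Finset.mem_filter.mp hn).1)
  have keyR : (d:ℝ) ^ Ω.card * ∏ n ∈ S, (n:ℝ)
      = ∏ n ∈ S, ((α:ℝ) * n + (β:ℝ) * ((n % d : ℤ) : ℝ)) := by
    have := congrArg (fun z : ℤ => (z : ℝ)) keyS
    push_cast at this
    exact this
  -- per element facts
  have hfacts : ∀ n ∈ S, 0 < n ∧ ¬ d ∣ n ∧ (1:ℤ) ≤ n % d ∧ n % d ≤ d - 1 ∧ M ≤ (n:ℝ) := by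
    intro n hn
    obtain ⟨hnΩ, hnd⟩ := Finset.mem_filter.mp hn
    refine ⟨hpos n hnΩ, hnd, ?_, ?_, ?_⟩
    · have h0 : 0 ≤ n % d := Int.emod_nonneg n (by omega)
      have hne0 : n % d ≠ 0 := fun h => hnd (Int.dvd_of_emod_eq_zero h)
      omega
    · have := Int.emod_lt_of_pos n hd0; omega
    · rw [hMv]; exact_mod_cast Ω.min'_le n hnΩ
  set x : ℝ := (β:ℝ) * ((d:ℝ) - 1) / ((α:ℝ) * M) with hx
  have hx0 : 0 < x := by
    apply div_pos (mul_pos hβR (by linarith)) (mul_pos hαR0 hM0)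
  -- lower bound
  have hlow : (α:ℝ) ^ S.card < (d:ℝ) ^ Ω.card := by
    have h1 : (α:ℝ) ^ S.card * ∏ n ∈ S, (n:ℝ) < (d:ℝ) ^ Ω.card * ∏ n ∈ S, (n:ℝ) := by
      rw [keyR, ← Finset.prod_const, ← Finset.prod_mul_distrib]
      refine Finset.prod_lt_prod_of_nonempty ?_ ?_ hSne
      · intro n hn
        obtain ⟨hn0, -, -, -, -⟩ := hfacts n hn
        have : (0:ℝ) < (n:ℝ) := by exact_mod_cast hn0
        positivity
      · intro n hn
        obtain ⟨hn0, -, h1n, -, -⟩ := hfacts n hn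
        have h1R : (1:ℝ) ≤ ((n % d : ℤ):ℝ) := by exact_mod_cast h1n
        nlinarith
    exact lt_of_mul_lt_mul_right h1 hPS.le
  -- upper bound
  have hup : (d:ℝ) ^ Ω.card ≤ ((α:ℝ) * (1 + x)) ^ S.card := by
    have h1 : (d:ℝ) ^ Ω.card * ∏ n ∈ S, (n:ℝ)
        ≤ ((α:ℝ) * (1 + x)) ^ S.card * ∏ n ∈ S, (n:ℝ) := by
      rw [keyR, ← Finset.prod_const, ← Finset.prod_mul_distrib]
      refine Finset.prod_le_prod ?_ ?_
      · intro n hn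
        obtain ⟨hn0, -, h1n, -, -⟩ := hfacts n hn
        have h1R : (1:ℝ) ≤ ((n % d : ℤ):ℝ) := by exact_mod_cast h1n
        have : (0:ℝ) < (n:ℝ) := by exact_mod_cast hn0
        nlinarith
      · intro n hn
        obtain ⟨hn0, -, h1n, hnd1, hMn⟩ := hfacts n hn
        have hndR : ((n % d : ℤ):ℝ) ≤ (d:ℝ) - 1 := by exact_mod_cast hnd1
        have hnR : (0:ℝ) < (n:ℝ) := by exact_mod_cast hn0
        have hxe : (α:ℝ) * (1 + x) = α + β * ((d:ℝ) - 1) / M := by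
          rw [hx]; field_simp
        rw [hxe]
        have h3 : (β:ℝ) * ((n % d : ℤ):ℝ) ≤ β * ((d:ℝ) - 1) * n / M := by
          rw [le_div_iff₀ hM0]
          nlinarith [mul_nonneg (mul_nonneg hβR.le hM0.le) (by linarith : (0:ℝ) ≤ (d:ℝ) - 1 - ((n % d : ℤ):ℝ)),
            mul_nonneg (mul_nonneg hβR.le (by linarith : (0:ℝ) ≤ (d:ℝ) - 1)) (by linarith : (0:ℝ) ≤ (n:ℝ) - M)]
        have : ((α:ℝ) + β * ((d:ℝ) - 1) / M) * n = α * n + β * ((d:ℝ) - 1) * n / M := by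
          ring
        rw [this]
        linarith
    exact le_of_mul_le_mul_right h1 hPS
  -- logs
  have hlogd : 0 < Real.log d := Real.log_pos hdR
  have hlogα : 0 < Real.log α := Real.log_pos hαR
  have hlog1 : K * Real.log α < L * Real.log d := by
    have h := Real.log_lt_log (by positivity) hlow
    rw [Real.log_pow, Real.log_pow] at h
    rw [hK, hL]; exact_mod_cast h
  have hlog2 : L * Real.log d ≤ K * (Real.log α + Real.log (1 + x)) := by
    have h := Real.log_le_log (by positivity) hup
    rw [Real.log_pow, Real.log_pow,
      Real.log_mul (ne_of_gt hαR0) (by positivity)] at h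
    rw [hK, hL]; exact_mod_cast h
  have hKnn : (0:ℝ) ≤ K := by rw [hK]; positivity
  have e1 : L - K * ξ = (L * Real.log d - K * Real.log α) / Real.log d := by
    rw [hξ]; field_simp
  refine ⟨?_, ?_, ?_⟩
  · rw [e1]
    exact div_pos (by linarith) hlogd
  · rw [e1, div_le_div_iff₀ hlogd hlogd]
    nlinarith [mul_le_mul_of_nonneg_right (by linarith : L * Real.log d - K * Real.log α ≤ K * Real.log (1 + x)) hlogd.le]
  · have e3 : K * (β:ℝ) * ((d:ℝ) - 1) / ((α:ℝ) * M * Real.log d) = K * x / Real.log d := by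
      rw [hx]; field_simp
    rw [e3]
    have hlogle : Real.log (1 + x) ≤ x := by
      have := Real.log_le_sub_one_of_pos (by positivity : (0:ℝ) < 1 + x)
      linarith
    gcongr
end
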